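/- Hermite addition theorem: for any m ≥ 1, real numbers α_1,…,α_m not all zero, real x_1,…,x_m, and any n ≥ 0, ∑ over (n_1,…,n_m) with n_1+⋯+n_m = n of (α_1^{n_1}⋯α_m^{n_m}/(n_1!⋯n_m!)) H_{n_1}(x_1)⋯H_{n_m}(x_m) = (|α|^n / n!) H_n(α·x / |α|), where |α| = √(α_1²+⋯+α_m²) and α·x = α_1x_1+⋯+α_mx_m. -/

import Mathlib

/-!
`c ^ n * H_n(x) / n!` is the `n`-th coefficient of `exp (2 c x t - c ^ 2 t ^ 2)`. Multiplying these
series over `i` adds the exponents, giving `exp (2 (α · x) t - |α| ^ 2 t ^ 2)`, whose `n`-th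
coefficient is `|α| ^ n * H_n(α · x / |α|) / n!`; the coefficient of a product is the sum over
`n₁ + ⋯ + nₘ = n` of the products of coefficients.
-/

open Finset

/-- Physicists' Hermite polynomial. -/
noncomputable def hermiteP (n : ℕ) (x : ℝ) : ℝ :=
  (Nat.factorial n) * ∑ j ∈ Finset.range (n / 2 + 1),
    (-1 : ℝ) ^ j * (2 * x) ^ (n - 2 * j) /
      ((Nat.factorial j) * (Nat.factorial (n - 2 * j)))

open PowerSeries

theorem PowerSeries.coeff_prod_eq_sum_piAntidiag {ι R : Type*} [CommSemiring R] [DecidableEq ι]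
    (f : ι → R⟦X⟧) (d : ℕ) (s : Finset ι) :
    coeff d (∏ j ∈ s, f j) = ∑ l ∈ s.piAntidiag d, ∏ i ∈ s, coeff (l i) (f i) := by
  rw [coeff_prod, finsuppAntidiag, sum_map, ← sum_attach (piAntidiag s d)]
  rfl

section CommRing

variable {R : Type*} [CommRing R]

theorem PowerSeries.rescale_expand_two (c : R) (φ : R⟦X⟧) :
    rescale c (expand 2 two_ne_zero φ) = expand 2 two_ne_zero (rescale (c ^ 2) φ) := by
  ext n
  simp only [coeff_rescale, coeff_expand]
  split_ifs with h
  · obtain ⟨k, rfl⟩ := h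
    rw [Nat.mul_div_cancel_left _ two_pos, pow_mul]
  · rw [mul_zero]

theorem PowerSeries.coeff_mul_expand_two (φ ψ : R⟦X⟧) (n : ℕ) :
    coeff n (φ * expand 2 two_ne_zero ψ) =
      ∑ j ∈ range (n / 2 + 1), coeff (n - 2 * j) φ * coeff j ψ := by
  have hinj : Set.InjOn (fun j => (n - 2 * j, 2 * j)) (range (n / 2 + 1) : Set ℕ) :=
    fun i _ j _ h => by simpa using congrArg Prod.snd h
  rw [coeff_mul, ← sum_subset (s₁ := (range (n / 2 + 1)).image fun j => (n - 2 * j, 2 * j)),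
    sum_image hinj]
  · simp
  · intro p hp
    obtain ⟨j, hj, rfl⟩ := mem_image.mp hp
    rw [HasAntidiagonal.mem_antidiagonal]
    rw [mem_range] at hj
    omega
  · rintro ⟨i, k⟩ hp hnot
    rw [HasAntidiagonal.mem_antidiagonal] at hp
    rw [coeff_expand_of_not_dvd, mul_zero]
    rintro ⟨j, rfl⟩
    exact hnot (mem_image.mpr
      ⟨j, mem_range.mpr (by omega), Prod.ext (show n - 2 * j = i by omega) rfl⟩)

end CommRing

section ExpSeries

variable {A : Type*} [CommRing A] [Algebra ℚ A]

/-- `exp (2 y X - s X ^ 2)`. -/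
noncomputable def hermiteExpSeries (s y : A) : A⟦X⟧ :=
  rescale (2 * y) (exp A) * expand 2 two_ne_zero (rescale (-s) (exp A))

theorem hermiteExpSeries_zero : hermiteExpSeries (0 : A) 0 = 1 := by
  simp [hermiteExpSeries]

theorem hermiteExpSeries_mul (s t y z : A) :
    hermiteExpSeries s y * hermiteExpSeries t z = hermiteExpSeries (s + t) (y + z) := by
  rw [hermiteExpSeries, hermiteExpSeries, hermiteExpSeries, mul_mul_mul_comm, ← map_mul,
    exp_mul_exp_eq_exp_add, exp_mul_exp_eq_exp_add, mul_add, neg_add]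

theorem prod_hermiteExpSeries {ι : Type*} (s y : ι → A) (t : Finset ι) :
    ∏ i ∈ t, hermiteExpSeries (s i) (y i) = hermiteExpSeries (∑ i ∈ t, s i) (∑ i ∈ t, y i) := by
  induction t using Finset.cons_induction with
  | empty => simp [hermiteExpSeries_zero]
  | cons i t hi ih => rw [prod_cons, sum_cons, sum_cons, ih, hermiteExpSeries_mul]

theorem rescale_hermiteExpSeries (c s y : A) :
    rescale c (hermiteExpSeries s y) = hermiteExpSeries (c ^ 2 * s) (c * y) := by
  rw [hermiteExpSeries, hermiteExpSeries, map_mul, rescale_rescale, rescale_expand_two,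
    rescale_rescale]
  rw [show 2 * y * c = 2 * (c * y) by ring, show -s * c ^ 2 = -(c ^ 2 * s) by ring]

end ExpSeries

theorem coeff_hermiteExpSeries_one (n : ℕ) (x : ℝ) :
    coeff n (hermiteExpSeries 1 x) = hermiteP n x / n.factorial := by
  rw [hermiteExpSeries, coeff_mul_expand_two, hermiteP,
    mul_div_cancel_left₀ _ (Nat.cast_ne_zero.mpr n.factorial_ne_zero)]
  refine sum_congr rfl fun j _ => ?_
  simp only [coeff_rescale, coeff_exp, map_div₀, map_one, map_natCast]
  ring

theorem coeff_hermiteExpSeries_sq_mul (n : ℕ) (c x : ℝ) :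
    coeff n (hermiteExpSeries (c ^ 2) (c * x)) = c ^ n / n.factorial * hermiteP n x := by
  rw [← mul_one (c ^ 2), ← rescale_hermiteExpSeries, coeff_rescale, coeff_hermiteExpSeries_one]
  ring

theorem Real.sqrt_sum_sq_mul_div {ι : Type*} (s : Finset ι) (α x : ι → ℝ) :
    √(∑ i ∈ s, α i ^ 2) * ((∑ i ∈ s, α i * x i) / √(∑ i ∈ s, α i ^ 2)) = ∑ i ∈ s, α i * x i := by
  have hnonneg : 0 ≤ ∑ i ∈ s, α i ^ 2 := sum_nonneg fun i _ => sq_nonneg (α i)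
  rcases hnonneg.eq_or_lt with h | h
  · have hα : ∀ i ∈ s, α i = 0 := fun i hi =>
      pow_eq_zero_iff two_ne_zero |>.mp
        ((sum_eq_zero_iff_of_nonneg fun i _ => sq_nonneg (α i)).mp h.symm i hi)
    rw [← h, Real.sqrt_zero, zero_mul, sum_eq_zero fun i hi => by rw [hα i hi, zero_mul]]
  · exact mul_div_cancel₀ _ (Real.sqrt_ne_zero'.mpr h)

theorem hermite_addition_theorem_general (m : ℕ) (α x : Fin m → ℝ) (n : ℕ) :
    ∑ f ∈ Finset.Nat.antidiagonalTuple m n,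
        (∏ i, α i ^ f i / (Nat.factorial (f i) : ℝ)) * ∏ i, hermiteP (f i) (x i)
      = (Real.sqrt (∑ i, α i ^ 2)) ^ n / (Nat.factorial n : ℝ) *
          hermiteP n ((∑ i, α i * x i) / Real.sqrt (∑ i, α i ^ 2)) := by
  have h := congrArg (coeff n)
    (prod_hermiteExpSeries (fun i => α i ^ 2) (fun i => α i * x i) univ)
  rw [coeff_prod_eq_sum_piAntidiag, piAntidiag_univ_fin_eq_antidiagonalTuple,
    ← Real.sq_sqrt (sum_nonneg fun i _ => sq_nonneg (α i)), ← Real.sqrt_sum_sq_mul_div univ α x,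
    coeff_hermiteExpSeries_sq_mul] at h
  simpa only [coeff_hermiteExpSeries_sq_mul, prod_mul_distrib] using h

theorem hermite_addition_theorem (m : ℕ) (hm : 1 ≤ m) (α x : Fin m → ℝ)
    (hα : α ≠ 0) (n : ℕ) :
    ∑ f ∈ Finset.Nat.antidiagonalTuple m n,
        (∏ i, α i ^ f i / (Nat.factorial (f i) : ℝ)) * ∏ i, hermiteP (f i) (x i)
      = (Real.sqrt (∑ i, α i ^ 2)) ^ n / (Nat.factorial n : ℝ) *
          hermiteP n ((∑ i, α i * x i) / Real.sqrt (∑ i, α i ^ 2)) :=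
  hermite_addition_theorem_general m α x n
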